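/- The generating function for ρ̄_o(n) satisfies ∑_{n≥0} ρ̄_o(n) q^n = (q^4;q^4)_∞^3/((q^2;q^2)_∞^2 (q^8;q^8)_∞) − 2q^2/(1−q^4) − 1, as formal power series. -/

import Mathlib

open PowerSeries Finset

/-- The infinite product `(q^a; q^a)_∞ = ∏_{k ≥ 1} (1 - q^{a k})`, encoded as the formal
power series whose `n`-th coefficient is the (stabilized) `n`-th coefficient of the
partial products `∏_{k=1}^{n+1} (1 - q^{a k})`.  For `a ≥ 1` this agrees with the usual
infinite product since factors with `a k > n` do not affect the coefficient of `q^n`. -/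
noncomputable def eulerProd (a : ℕ) : PowerSeries ℚ :=
  PowerSeries.mk fun n =>
    PowerSeries.coeff n (∏ k ∈ Finset.range (n + 1), (1 - (PowerSeries.X : PowerSeries ℚ) ^ (a * (k + 1))))

/-- `ρ̄_o(n)`: the number of partitions of `n` whose largest part `m` occurs exactly once
and whose remaining parts form an overpartition of `m` into odd parts; an overpartition is
the underlying partition together with the set `S` of overlined part sizes. -/
noncomputable def rhoBarOdd (n : ℕ) : ℕ :=
  Nat.card {ps : n.Partition × Finset ℕ // ∃ m ∈ ps.1.parts, ps.1.parts.count m = 1 ∧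
    (∀ x ∈ ps.1.parts, x ≤ m) ∧ (ps.1.parts.erase m).sum = m ∧
    (∀ x ∈ ps.1.parts.erase m, Odd x) ∧
    ∀ x ∈ ps.2, x ∈ ps.1.parts.erase m}

namespace RhoAux

open scoped Classical
noncomputable section

abbrev PS := PowerSeries ℚ

/-- congruence mod `X^(n+1)` -/
def Cong (n : ℕ) (f g : PS) : Prop := (X : PS) ^ (n+1) ∣ (f - g)

theorem cong_iff_coeff {n : ℕ} {f g : PS} :
    Cong n f g ↔ ∀ m ≤ n, coeff m f = coeff m g := by
  rw [Cong, PowerSeries.X_pow_dvd_iff]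
  constructor
  · intro h m hm
    have := h m (by omega)
    rwa [map_sub, sub_eq_zero] at this
  · intro h m hm
    rw [map_sub, sub_eq_zero]
    exact h m (by omega)

theorem Cong.refl {n : ℕ} (f : PS) : Cong n f f := by simp [Cong]

theorem cong_of_eq {n : ℕ} {f g : PS} (h : f = g) : Cong n f g := by simp [Cong, h]

theorem Cong.symm {n : ℕ} {f g : PS} (h : Cong n f g) : Cong n g f := by
  rw [cong_iff_coeff] at h ⊢; intro m hm; exact (h m hm).symm

theorem Cong.trans {n : ℕ} {f g h : PS} (h1 : Cong n f g) (h2 : Cong n g h) : Cong n f h := by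
  rw [cong_iff_coeff] at h1 h2 ⊢; intro m hm; rw [h1 m hm, h2 m hm]

theorem Cong.mul {n : ℕ} {f g h k : PS} (h1 : Cong n f g) (h2 : Cong n h k) :
    Cong n (f * h) (g * k) := by
  obtain ⟨a, ha⟩ := h1
  obtain ⟨b, hb⟩ := h2
  refine ⟨a * k + f * b, ?_⟩
  have : f * h - g * k = (f - g) * k + f * (h - k) := by ring
  rw [this, ha, hb]; ring

theorem Cong.pow {n : ℕ} {f g : PS} (h : Cong n f g) (k : ℕ) : Cong n (f ^ k) (g ^ k) := by
  induction k with
  | zero => simpa using Cong.refl 1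
  | succ k ih => rw [pow_succ, pow_succ]; exact ih.mul h

theorem cong_one_of_gt {n j : ℕ} (hj : n < j) (c : ℚ) : Cong n (1 + (C c) * X ^ j) 1 := by
  have h : (X : PS) ^ (n+1) ∣ X ^ j := pow_dvd_pow _ (by omega)
  simpa [Cong] using h.mul_left (C c)

theorem cong_prod_one {n : ℕ} (T : Finset ℕ) (f : ℕ → PS)
    (hf : ∀ j ∈ T, Cong n (f j) 1) : Cong n (∏ j ∈ T, f j) 1 := by
  induction T using Finset.cons_induction with
  | empty => simpa using Cong.refl 1
  | cons a T ha ih =>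
      rw [Finset.prod_cons]
      have := (hf a (mem_cons_self a T)).mul (ih (fun j hj => hf j (mem_cons.2 (Or.inr hj))))
      simpa using this

theorem cong_prod_filter {n : ℕ} (T : Finset ℕ) (f : ℕ → PS)
    (hf : ∀ j, n < j → Cong n (f j) 1) :
    Cong n (∏ j ∈ T, f j) (∏ j ∈ T.filter (· ≤ n), f j) := by
  rw [← Finset.prod_filter_mul_prod_filter_not T (· ≤ n) f]
  have h1 : Cong n (∏ j ∈ T.filter (fun j => ¬ j ≤ n), f j) 1 :=
    cong_prod_one _ _ (fun j hj => hf j (by simp at hj; omega))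
  have := (Cong.refl (n := n) (∏ j ∈ T.filter (· ≤ n), f j)).mul h1
  simpa using this

/-- product `∏ (1 - X^j)` over a finset -/
def negP (T : Finset ℕ) : PS := ∏ j ∈ T, (1 - X ^ j)

/-- product `∏ (1 + X^j)` over a finset -/
def posP (T : Finset ℕ) : PS := ∏ j ∈ T, (1 + X ^ j)

theorem one_sub_eq (j : ℕ) : (1 - X ^ j : PS) = 1 + (C (-1)) * X ^ j := by
  simp; ring

theorem cong_negP_filter {n : ℕ} (T : Finset ℕ) :
    Cong n (negP T) (negP (T.filter (· ≤ n))) := by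
  have := cong_prod_filter (n := n) T (fun j => 1 - X ^ j) (fun j hj => by
    rw [one_sub_eq]; exact cong_one_of_gt hj (-1))
  simpa [negP] using this

theorem negP_congr {T U : Finset ℕ} (h : T = U) : negP T = negP U := by rw [h]

/-- multiples of `a` in `[1, n]` -/
def Ms (a n : ℕ) : Finset ℕ := (range (n+1)).filter (fun j => j ≠ 0 ∧ a ∣ j)

theorem euler_cong (a : ℕ) (ha : 1 ≤ a) (n : ℕ) :
    Cong n (eulerProd a) (negP (Ms a n)) := by
  rw [cong_iff_coeff]
  intro m hm
  have h1 : coeff m (eulerProd a)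
      = coeff m (∏ k ∈ range (m + 1), (1 - (X : PS) ^ (a * (k + 1)))) := by
    simp [eulerProd, coeff_mk]
  have hinj : Set.InjOn (fun k => a * (k + 1)) (range (m+1)) := by
    intro x _ y _ hxy
    simp only at hxy
    have : x + 1 = y + 1 := Nat.eq_of_mul_eq_mul_left (by omega) hxy
    omega
  have h2 : (∏ k ∈ range (m + 1), (1 - (X : PS) ^ (a * (k + 1))))
      = negP ((range (m+1)).image (fun k => a * (k + 1))) := by
    rw [negP, Finset.prod_image (fun x hx y hy h => hinj hx hy h)]
  have key : ((range (m+1)).image (fun k => a * (k + 1))).filter (· ≤ m)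
      = (Ms a n).filter (· ≤ m) := by
    ext j
    simp only [mem_filter, mem_image, mem_range, Ms, ne_eq]
    constructor
    · rintro ⟨⟨k, hk, rfl⟩, hle⟩
      refine ⟨⟨by omega, by positivity, Dvd.intro _ rfl⟩, hle⟩
    · rintro ⟨⟨hj, hj0, t, rfl⟩, hle⟩
      have ht : 1 ≤ t := by by_contra h; push_neg at h; interval_cases t <;> omega
      have htt : t ≤ a * t := Nat.le_mul_of_pos_left t (by omega)
      refine ⟨⟨t - 1, by omega, by congr 1; omega⟩, hle⟩
  have c1 := cong_negP_filter (n := m) ((range (m+1)).image (fun k => a * (k + 1)))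
  have c2 := cong_negP_filter (n := m) (Ms a n)
  rw [cong_iff_coeff] at c1 c2
  rw [h1, h2, c1 m le_rfl, c2 m le_rfl, key]

/-- A convenience constructor for the power series whose coefficients indicate a subset. -/
def indicatorSeries (α : Type*) [Semiring α] (s : Set ℕ) : PowerSeries α :=
  PowerSeries.mk fun n => if n ∈ s then 1 else 0

theorem coeff_indicator (s : Set ℕ) [Semiring α] (n : ℕ) :
    coeff n (indicatorSeries α s) = if n ∈ s then 1 else 0 :=
  coeff_mk _ _

theorem coeff_indicator_pos (s : Set ℕ) [Semiring α] (n : ℕ) (h : n ∈ s) :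
    coeff n (indicatorSeries α s) = 1 := by rw [coeff_indicator, if_pos h]

theorem coeff_indicator_neg (s : Set ℕ) [Semiring α] (n : ℕ) (h : n ∉ s) :
    coeff n (indicatorSeries α s) = 0 := by rw [coeff_indicator, if_neg h]

theorem constantCoeff_indicator (s : Set ℕ) [Semiring α] :
    constantCoeff (indicatorSeries α s) = if 0 ∈ s then 1 else 0 :=
  rfl

theorem two_series (i : ℕ) [Semiring α] :
    1 + (X : PowerSeries α) ^ i.succ = indicatorSeries α {0, i.succ} := by
  ext n
  simp only [coeff_indicator, coeff_one, coeff_X_pow, Set.mem_insert_iff, Set.mem_singleton_iff,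
    map_add]
  cases' n with d
  · simp [(Nat.succ_ne_zero i).symm]
  · simp [Nat.succ_ne_zero d]

theorem num_series' [Field α] (i : ℕ) :
    (1 - (X : PowerSeries α) ^ (i + 1))⁻¹ = indicatorSeries α {k | i + 1 ∣ k} := by
  rw [PowerSeries.inv_eq_iff_mul_eq_one]
  · ext n
    cases n with
    | zero => simp [mul_sub, zero_pow, constantCoeff_indicator]
    | succ n =>
      simp only [coeff_one, if_false, mul_sub, mul_one, coeff_indicator,
        LinearMap.map_sub, reduceCtorEq]
      simp_rw [coeff_mul, coeff_X_pow, coeff_indicator, @boole_mul _ _ _ _]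
      erw [@sum_ite _ _ _ _ _ (fun _ => Classical.propDecidable _), sum_ite]
      simp_rw [@filter_filter _ _ _ _ _, sum_const_zero, add_zero, sum_const, nsmul_eq_mul, mul_one,
        sub_eq_iff_eq_add, zero_add]
      symm
      split_ifs with h
      · suffices #{a ∈ antidiagonal (n + 1) | i + 1 ∣ a.fst ∧ a.snd = i + 1} = 1 by
          simp only [Set.mem_setOf_eq]; convert congr_arg ((↑) : ℕ → α) this; norm_cast
        rw [card_eq_one]
        cases' h with p hp
        refine ⟨((i + 1) * (p - 1), i + 1), ?_⟩
        ext ⟨a₁, a₂⟩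
        simp only [mem_filter, Prod.mk.injEq, HasAntidiagonal.mem_antidiagonal, mem_singleton]
        constructor
        · rintro ⟨a_left, ⟨a, rfl⟩, rfl⟩
          refine ⟨?_, rfl⟩
          rw [Nat.mul_sub_left_distrib, ← hp, ← a_left, mul_one, Nat.add_sub_cancel]
        · rintro ⟨rfl, rfl⟩
          match p with
          | 0 => rw [mul_zero] at hp; cases hp
          | p + 1 => rw [hp]; simp [mul_add]
      · suffices #{a ∈ antidiagonal (n + 1) | i + 1 ∣ a.fst ∧ a.snd = i + 1} = 0 by
          simp only [Set.mem_setOf_eq]; convert congr_arg ((↑) : ℕ → α) this; norm_cast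
        rw [card_eq_zero]
        apply eq_empty_of_forall_notMem
        simp only [Prod.forall, mem_filter, not_and, HasAntidiagonal.mem_antidiagonal]
        rintro _ h₁ h₂ ⟨a, rfl⟩ rfl
        apply h
        simp [← h₂]
  · simp [zero_pow]

def mkOdd : ℕ ↪ ℕ :=
  ⟨fun i => 2 * i + 1, fun x y h => by linarith⟩

-- The main workhorse of the partition theorem proof.
theorem partialGF_prop (α : Type*) [CommSemiring α] (n : ℕ) (s : Finset ℕ) (hs : ∀ i ∈ s, 0 < i)
    (c : ℕ → Set ℕ) (hc : ∀ i, i ∉ s → 0 ∈ c i) :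
    #{p : n.Partition | (∀ j, p.parts.count j ∈ c j) ∧ ∀ j ∈ p.parts, j ∈ s} =
      coeff n (∏ i ∈ s, indicatorSeries α ((· * i) '' c i)) := by
  simp_rw [coeff_prod, coeff_indicator, prod_boole, sum_boole]
  apply congr_arg
  simp only [mem_univ, forall_true_left, not_and, not_forall, exists_prop,
    Set.mem_image, not_exists]
  set φ : (a : Nat.Partition n) →
    a ∈ filter (fun p ↦ (∀ (j : ℕ), Multiset.count j p.parts ∈ c j) ∧ ∀ j ∈ p.parts, j ∈ s) univ →
    ℕ →₀ ℕ := fun p _ => {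
      toFun := fun i => Multiset.count i p.parts • i
      support := Finset.filter (fun i => i ≠ 0) p.parts.toFinset
      mem_support_toFun := fun a => by
        simp only [smul_eq_mul, ne_eq, mul_eq_zero, Multiset.count_eq_zero]
        rw [not_or, not_not]
        simp only [Multiset.mem_toFinset, not_not, mem_filter] }
  refine Finset.card_bij φ ?_ ?_ ?_
  · intro a ha
    simp only [φ, not_forall, not_exists, not_and, exists_prop, mem_filter]
    rw [mem_finsuppAntidiag]
    dsimp only [ne_eq, smul_eq_mul, id_eq, eq_mpr_eq_cast, le_eq_subset, Finsupp.coe_mk]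
    simp only [mem_univ, forall_true_left, not_and, not_forall, exists_prop,
      mem_filter, true_and] at ha
    refine ⟨⟨?_, fun i ↦ ?_⟩, fun i _ ↦ ⟨a.parts.count i, ha.1 i, rfl⟩⟩
    · conv_rhs => simp [← a.parts_sum]
      rw [sum_multiset_count_of_subset _ s]
      · simp only [smul_eq_mul]
      · intro i
        simp only [Multiset.mem_toFinset, not_not, mem_filter]
        apply ha.2
    · simp only [ne_eq, Multiset.mem_toFinset, not_not, mem_filter, and_imp]
      exact fun hi _ ↦ ha.2 i hi
  · intro p₁ hp₁ p₂ hp₂ h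
    apply Nat.Partition.ext
    simp only [true_and, mem_univ, mem_filter] at hp₁ hp₂
    ext i
    simp only [φ, ne_eq, Multiset.mem_toFinset, not_not, smul_eq_mul, Finsupp.mk.injEq] at h
    by_cases hi : i = 0
    · rw [hi]
      rw [Multiset.count_eq_zero_of_notMem]
      · rw [Multiset.count_eq_zero_of_notMem]
        intro a; exact Nat.lt_irrefl 0 (hs 0 (hp₂.2 0 a))
      intro a; exact Nat.lt_irrefl 0 (hs 0 (hp₁.2 0 a))
    · rw [← mul_left_inj' hi]
      rw [funext_iff] at h
      exact h.2 i
  · simp only [φ, mem_filter, mem_finsuppAntidiag, mem_univ, exists_prop, true_and, and_assoc]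
    rintro f ⟨hf, hf₃, hf₄⟩
    have hf' : f ∈ finsuppAntidiag s n := mem_finsuppAntidiag.mpr ⟨hf, hf₃⟩
    simp only [mem_finsuppAntidiag] at hf'
    refine ⟨⟨∑ i ∈ s, Multiset.replicate (f i / i) i, ?_, ?_⟩, ?_, ?_, ?_⟩
    · intro i hi
      simp only [exists_prop, Multiset.mem_sum, mem_map, Function.Embedding.coeFn_mk] at hi
      rcases hi with ⟨t, ht, z⟩
      apply hs
      rwa [Multiset.eq_of_mem_replicate z]
    · simp_rw [Multiset.sum_sum, Multiset.sum_replicate, Nat.nsmul_eq_mul]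
      rw [← hf'.1]
      refine sum_congr rfl fun i hi => Nat.div_mul_cancel ?_
      rcases hf₄ i hi with ⟨w, _, hw₂⟩
      rw [← hw₂]
      exact dvd_mul_left _ _
    · intro i
      simp_rw [Multiset.count_sum', Multiset.count_replicate, sum_ite_eq']
      split_ifs with h
      · rcases hf₄ i h with ⟨w, hw₁, hw₂⟩
        rwa [← hw₂, Nat.mul_div_cancel _ (hs i h)]
      · exact hc _ h
    · intro i hi
      rw [Multiset.mem_sum] at hi
      rcases hi with ⟨j, hj₁, hj₂⟩
      rwa [Multiset.eq_of_mem_replicate hj₂]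
    · ext i
      simp_rw [Multiset.count_sum', Multiset.count_replicate, sum_ite_eq']
      simp only [ne_eq, Multiset.mem_toFinset, not_not, smul_eq_mul, ite_mul,
        zero_mul, Finsupp.coe_mk]
      split_ifs with h
      · apply Nat.div_mul_cancel
        rcases hf₄ i h with ⟨w, _, hw₂⟩
        apply Dvd.intro_left _ hw₂
      · apply symm
        rw [← Finsupp.notMem_support_iff]
        exact notMem_mono hf'.2 h


def R2 (n : ℕ) : Finset ℕ := (range (n+1)).filter (fun j => j % 4 = 2)
def R4 (n : ℕ) : Finset ℕ := (range (n+1)).filter (fun j => j % 8 = 4)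

/-- number of partitions of `m` into distinct parts `≡ 2 mod 4` -/
def dC (m : ℕ) : ℕ := #{p : m.Partition | p.parts.Nodup ∧ ∀ j ∈ p.parts, j % 4 = 2}
/-- number of partitions of `m` into parts `≡ 2 mod 4` -/
def oC (m : ℕ) : ℕ := #{p : m.Partition | ∀ j ∈ p.parts, j % 4 = 2}

theorem part_le {m : ℕ} (p : m.Partition) {j : ℕ} (hj : j ∈ p.parts) : j ≤ m := by
  conv_rhs => rw [← p.parts_sum]
  exact Multiset.single_le_sum (fun x _ => Nat.zero_le x) j hj

theorem R2_pos {n : ℕ} : ∀ i ∈ R2 n, 0 < i := by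
  intro i hi; simp only [R2, mem_filter] at hi; omega

theorem oC_coeff (n m : ℕ) (hm : m ≤ n) :
    (oC m : ℚ) = coeff m (∏ i ∈ R2 n, indicatorSeries ℚ {k | i ∣ k}) := by
  rw [oC]
  have := partialGF_prop ℚ m (R2 n) R2_pos (fun _ => Set.univ) (fun _ _ => trivial)
  rw [show (∏ i ∈ R2 n, indicatorSeries ℚ ((· * i) '' Set.univ))
      = ∏ i ∈ R2 n, indicatorSeries ℚ {k | i ∣ k} from ?_] at this
  · rw [← this]
    congr 2
    apply Finset.filter_congr
    intro p _
    simp only [Set.mem_univ, forall_const, true_and, R2, mem_filter, mem_range]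
    constructor
    · intro h j hj
      exact ⟨Nat.lt_succ_of_le ((part_le p hj).trans hm), h j hj⟩
    · intro h j hj
      exact (h j hj).2
  · apply Finset.prod_congr rfl
    intro i _
    have hset : ((· * i) '' Set.univ : Set ℕ) = {k | i ∣ k} := by
      ext k
      simp only [Set.mem_image, Set.mem_univ, true_and, Set.mem_setOf_eq]
      constructor
      · rintro ⟨c, rfl⟩; exact ⟨c, mul_comm c i⟩
      · rintro ⟨c, rfl⟩; exact ⟨c, mul_comm c i⟩
    rw [hset]

theorem one_add_X_pow (i : ℕ) (hi : i ≠ 0) :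
    1 + (X : PS) ^ i = indicatorSeries ℚ {0, i} := by
  ext n
  simp only [map_add, coeff_one, coeff_X_pow, coeff_indicator, Set.mem_insert_iff,
    Set.mem_singleton_iff]
  split_ifs <;> simp_all <;> omega

theorem dC_coeff (n m : ℕ) (hm : m ≤ n) :
    (dC m : ℚ) = coeff m (posP (R2 n)) := by
  rw [dC]
  have := partialGF_prop ℚ m (R2 n) R2_pos (fun _ => ({0, 1} : Set ℕ))
    (fun _ _ => Set.mem_insert 0 _)
  rw [show (∏ i ∈ R2 n, indicatorSeries ℚ ((· * i) '' {0, 1}))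
      = posP (R2 n) from ?_] at this
  · rw [← this]
    congr 2
    apply Finset.filter_congr
    intro p _
    simp only [R2, mem_filter, mem_range, Set.mem_insert_iff, Set.mem_singleton_iff]
    constructor
    · intro h
      refine ⟨fun j => ?_, fun j hj => ⟨Nat.lt_succ_of_le ((part_le p hj).trans hm), h.2 j hj⟩⟩
      have := Multiset.nodup_iff_count_le_one.1 h.1 j
      omega
    · intro h
      refine ⟨Multiset.nodup_iff_count_le_one.2 fun j => ?_, fun j hj => (h.2 j hj).2⟩
      have := h.1 j
      omega
  · apply Finset.prod_congr rfl
    intro i hi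
    have hi0 : i ≠ 0 := by have := R2_pos i hi; omega
    rw [show ((· * i) '' {0, 1} : Set ℕ) = {0, i} from ?_, ← one_add_X_pow i hi0]
    ext k
    simp only [Set.mem_image, Set.mem_insert_iff, Set.mem_singleton_iff]
    constructor
    · rintro ⟨c, (rfl | rfl), rfl⟩ <;> simp
    · rintro (rfl | rfl)
      · exact ⟨0, Or.inl rfl, by simp⟩
      · exact ⟨1, Or.inr rfl, by simp⟩

theorem ind_mul_neg (i : ℕ) (hi : i ≠ 0) :
    (1 - (X : PS) ^ i) * indicatorSeries ℚ {k | i ∣ k} = 1 := by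
  ext m
  rw [sub_mul, one_mul, map_sub, coeff_X_pow_mul', coeff_indicator, coeff_one]
  simp only [Set.mem_setOf_eq]
  by_cases h0 : m = 0
  · subst h0
    have : ¬ i ≤ 0 := by omega
    simp [this]
  · rw [if_neg h0]
    by_cases hle : i ≤ m
    · rw [if_pos hle, coeff_indicator]
      simp only [Set.mem_setOf_eq]
      have hiff : (i ∣ m - i) ↔ (i ∣ m) := by
        constructor
        · intro h
          have := Nat.dvd_add h (dvd_refl i)
          rwa [Nat.sub_add_cancel hle] at this
        · intro h; exact Nat.dvd_sub h (dvd_refl i)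
      by_cases hd : i ∣ m
      · rw [if_pos hd, if_pos (hiff.2 hd)]; ring
      · rw [if_neg hd, if_neg (fun hh => hd (hiff.1 hh))]; ring
    · have hnd : ¬ i ∣ m := fun hd => hle (Nat.le_of_dvd (Nat.pos_of_ne_zero h0) hd)
      rw [if_neg hnd, if_neg hle, sub_zero]

theorem negR2_inds (n : ℕ) :
    negP (R2 n) * (∏ i ∈ R2 n, indicatorSeries ℚ {k | i ∣ k}) = 1 := by
  rw [negP, ← Finset.prod_mul_distrib]
  rw [Finset.prod_congr rfl (fun i hi => ind_mul_neg i (by have := R2_pos i hi; omega))]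
  exact Finset.prod_const_one

theorem pos_mul_negP (T : Finset ℕ) :
    posP T * negP T = negP (T.image (fun j => 2 * j)) := by
  rw [posP, negP, ← Finset.prod_mul_distrib, negP,
    Finset.prod_image (fun x _ y _ h => by omega)]
  apply Finset.prod_congr rfl
  intro j _
  have hp : (X : PS) ^ (2 * j) = (X ^ j) ^ 2 := by rw [← pow_mul, mul_comm]
  rw [hp]; ring

theorem himg (n : ℕ) : ((R2 n).image (fun j => 2 * j)).filter (· ≤ n) = R4 n := by
  ext j
  simp only [R2, R4, mem_filter, mem_image, mem_range]
  constructor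
  · rintro ⟨⟨i, ⟨hi1, hi2⟩, rfl⟩, hle⟩
    omega
  · rintro ⟨hj, hj8⟩
    exact ⟨⟨j / 2, ⟨by omega, by omega⟩, by omega⟩, by omega⟩

theorem negP_union {A B : Finset ℕ} (h : Disjoint A B) :
    negP (A ∪ B) = negP A * negP B := Finset.prod_union h

theorem hsplit2 (n : ℕ) : Ms 2 n = R2 n ∪ Ms 4 n := by
  ext j; simp only [Ms, R2, mem_union, mem_filter, mem_range, ne_eq]; omega

theorem disj2 (n : ℕ) : Disjoint (R2 n) (Ms 4 n) := by
  rw [Finset.disjoint_left]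
  intro j hj hj'
  simp only [Ms, R2, mem_filter, mem_range, ne_eq] at hj hj'
  omega

theorem hsplit4 (n : ℕ) : Ms 4 n = R4 n ∪ Ms 8 n := by
  ext j; simp only [Ms, R4, mem_union, mem_filter, mem_range, ne_eq]; omega

theorem disj4 (n : ℕ) : Disjoint (R4 n) (Ms 8 n) := by
  rw [Finset.disjoint_left]
  intro j hj hj'
  simp only [Ms, R4, mem_filter, mem_range, ne_eq] at hj hj'
  omega

theorem main_cong (n : ℕ) :
    Cong n (mk (fun m => (dC m : ℚ)) * mk (fun m => (oC m : ℚ))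
      * eulerProd 2 ^ 2 * eulerProd 8) (eulerProd 4 ^ 3) := by
  set I := ∏ i ∈ R2 n, indicatorSeries ℚ {k | i ∣ k} with hI
  have cD : Cong n (mk (fun m => (dC m : ℚ))) (posP (R2 n)) := by
    rw [cong_iff_coeff]; intro m hm; rw [coeff_mk]; exact dC_coeff n m hm
  have cO : Cong n (mk (fun m => (oC m : ℚ))) I := by
    rw [cong_iff_coeff]; intro m hm; rw [coeff_mk]; exact oC_coeff n m hm
  have cE2 : Cong n (eulerProd 2) (negP (R2 n) * (negP (R4 n) * negP (Ms 8 n))) := by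
    refine (euler_cong 2 (by norm_num) n).trans (cong_of_eq ?_)
    rw [hsplit2 n, negP_union (disj2 n), hsplit4 n, negP_union (disj4 n)]
  have cE8 : Cong n (eulerProd 8) (negP (Ms 8 n)) := euler_cong 8 (by norm_num) n
  have cE4 : Cong n (eulerProd 4) (negP (R4 n) * negP (Ms 8 n)) := by
    refine (euler_cong 4 (by norm_num) n).trans (cong_of_eq ?_)
    rw [hsplit4 n, negP_union (disj4 n)]
  have cMul : Cong n (posP (R2 n) * negP (R2 n)) (negP (R4 n)) := by
    rw [pos_mul_negP]
    exact (cong_negP_filter _).trans (cong_of_eq (negP_congr (himg n)))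
  have step1 : Cong n (mk (fun m => (dC m : ℚ)) * mk (fun m => (oC m : ℚ))
      * eulerProd 2 ^ 2 * eulerProd 8)
      (posP (R2 n) * I * (negP (R2 n) * (negP (R4 n) * negP (Ms 8 n))) ^ 2 * negP (Ms 8 n)) :=
    ((cD.mul cO).mul (cE2.pow 2)).mul cE8
  have eqmid : posP (R2 n) * I * (negP (R2 n) * (negP (R4 n) * negP (Ms 8 n))) ^ 2
        * negP (Ms 8 n)
      = (posP (R2 n) * negP (R2 n)) * ((negP (R2 n) * I)
        * ((negP (R4 n)) ^ 2 * (negP (Ms 8 n)) ^ 3)) := by ring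
  have step2 : Cong n (posP (R2 n) * I * (negP (R2 n) * (negP (R4 n) * negP (Ms 8 n))) ^ 2
        * negP (Ms 8 n))
      (negP (R4 n) * (1 * ((negP (R4 n)) ^ 2 * (negP (Ms 8 n)) ^ 3))) := by
    refine (cong_of_eq eqmid).trans ?_
    exact cMul.mul ((cong_of_eq (negR2_inds n)).mul (Cong.refl _))
  have eqend : negP (R4 n) * (1 * ((negP (R4 n)) ^ 2 * (negP (Ms 8 n)) ^ 3))
      = (negP (R4 n) * negP (Ms 8 n)) ^ 3 := by ring
  refine (step1.trans (step2.trans ?_))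
  exact (cong_of_eq eqend).trans ((cE4.pow 3).symm)

theorem main_eq :
    mk (fun m => (dC m : ℚ)) * mk (fun m => (oC m : ℚ)) * eulerProd 2 ^ 2 * eulerProd 8
      = eulerProd 4 ^ 3 := by
  ext m
  exact cong_iff_coeff.1 (main_cong m) m le_rfl

/-! ### Combinatorial counting -/

/-- overpartition objects: a partition together with a subset of its part sizes -/
def POb (n : ℕ) : Type := Σ p : n.Partition, {S : Finset ℕ // S ∈ p.parts.toFinset.powerset}

instance PObFintype (n : ℕ) : Fintype (POb n) := by unfold POb; infer_instance

/-- those whose parts are all `≡ 2 mod 4` -/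
def Pst (n : ℕ) : Finset (POb n) := Finset.univ.filter fun x => ∀ j ∈ x.1.parts, j % 4 = 2

def Pc (n : ℕ) : ℕ := (Pst n).card

theorem POb_ext {n : ℕ} {x y : POb n} (h1 : x.1.parts = y.1.parts) (h2 : x.2.1 = y.2.1) :
    x = y := by
  obtain ⟨p, S⟩ := x
  obtain ⟨q, T⟩ := y
  have hpq : p = q := Nat.Partition.ext h1
  subst hpq
  exact congrArg _ (Subtype.ext h2)

theorem Sval_le {n : ℕ} (x : POb n) : x.2.1.1 ≤ x.1.parts := by
  have hsub : x.2.1 ⊆ x.1.parts.toFinset := Finset.mem_powerset.1 x.2.2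
  rw [Multiset.le_iff_count]
  intro a
  by_cases ha : a ∈ x.2.1
  · rw [Multiset.count_eq_one_of_mem x.2.1.nodup ha]
    exact Multiset.one_le_count_iff_mem.2 (Multiset.mem_toFinset.1 (hsub ha))
  · rw [Multiset.count_eq_zero_of_notMem ha]
    exact Nat.zero_le _

theorem msum_le {s t : Multiset ℕ} (h : s ≤ t) : s.sum ≤ t.sum := by
  obtain ⟨u, rfl⟩ := Multiset.le_iff_exists_add.1 h
  simp

theorem fiber_card (n i : ℕ) (hi : i ≤ n) :
    ((Pst n).filter fun x => x.2.1.1.sum = i).card = dC i * oC (n - i) := by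
  rw [dC, oC, ← Finset.card_product]
  refine Finset.card_bij'
    (fun x hx => (⟨x.2.1.1, ?_, ?_⟩, ⟨x.1.parts - x.2.1.1, ?_, ?_⟩))
    (fun y hy => ⟨⟨y.1.parts + y.2.parts, ?_, ?_⟩, ⟨y.1.parts.toFinset, ?_⟩⟩) ?_ ?_ ?_ ?_
  · -- positivity of S parts
    intro a ha
    exact x.1.parts_pos (Multiset.mem_of_le (Sval_le x) ha)
  · -- sum of S parts
    simp only [Pst, Finset.mem_filter, Finset.mem_univ, true_and] at hx
    exact hx.2
  · -- positivity of remaining parts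
    intro a ha
    exact x.1.parts_pos (Multiset.mem_of_le (tsub_le_self) ha)
  · -- sum of remaining parts
    simp only [Pst, Finset.mem_filter, Finset.mem_univ, true_and] at hx
    have hle := Sval_le x
    have hadd : x.2.1.1 + (x.1.parts - x.2.1.1) = x.1.parts := add_tsub_cancel_of_le hle
    have : (x.2.1.1 + (x.1.parts - x.2.1.1)).sum = n := by rw [hadd, x.1.parts_sum]
    rw [Multiset.sum_add] at this
    omega
  · -- positivity of combined parts
    intro a ha
    rw [Multiset.mem_add] at ha
    rcases ha with h | h
    · exact y.1.parts_pos h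
    · exact y.2.parts_pos h
  · -- sum of combined parts
    rw [Multiset.sum_add, y.1.parts_sum, y.2.parts_sum]
    omega
  · -- powerset membership
    rw [Finset.mem_powerset]
    intro a ha
    rw [Multiset.mem_toFinset] at ha ⊢
    rw [Multiset.mem_add]
    exact Or.inl ha
  · -- forward maps into target
    intro x hx
    simp only [Pst, Finset.mem_filter, Finset.mem_univ, true_and] at hx
    rw [Finset.mem_product]
    constructor
    · simp only [Finset.mem_filter, Finset.mem_univ, true_and]
      exact ⟨x.2.1.nodup, fun j hj => hx.1 j (Multiset.mem_of_le (Sval_le x) hj)⟩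
    · simp only [Finset.mem_filter, Finset.mem_univ, true_and]
      exact fun j hj => hx.1 j (Multiset.mem_of_le (tsub_le_self) hj)
  · -- backward maps into source
    intro y hy
    rw [Finset.mem_product] at hy
    simp only [Finset.mem_filter, Finset.mem_univ, true_and] at hy
    simp only [Pst, Finset.mem_filter, Finset.mem_univ, true_and]
    refine Finset.mem_filter.2 ⟨Finset.mem_filter.2 ⟨Finset.mem_univ _, ?_⟩, ?_⟩
    · intro j hj
      rw [Multiset.mem_add] at hj
      rcases hj with h | h
      · exact hy.1.2 j h
      · exact hy.2 j h
    · show (y.1.parts.toFinset.val).sum = i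
      rw [Multiset.toFinset_val, Multiset.dedup_eq_self.2 hy.1.1, y.1.parts_sum]
  · -- left inverse
    intro x hx
    apply POb_ext
    · show x.2.1.1 + (x.1.parts - x.2.1.1) = x.1.parts
      exact add_tsub_cancel_of_le (Sval_le x)
    · show (x.2.1.1).toFinset = x.2.1
      exact Finset.val_toFinset _
  · -- right inverse
    intro y hy
    rw [Finset.mem_product] at hy
    simp only [Finset.mem_filter, Finset.mem_univ, true_and] at hy
    have hded : y.1.parts.toFinset.val = y.1.parts := by
      rw [Multiset.toFinset_val]; exact Multiset.dedup_eq_self.2 hy.1.1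
    refine Prod.ext (Nat.Partition.ext ?_) (Nat.Partition.ext ?_)
    · exact hded
    · show (y.1.parts + y.2.parts) - y.1.parts.toFinset.val = y.2.parts
      rw [hded, add_tsub_cancel_left]

theorem Pc_conv (n : ℕ) : Pc n = ∑ i ∈ range (n+1), dC i * oC (n - i) := by
  rw [Pc, Finset.card_eq_sum_card_fiberwise (f := fun x : POb n => x.2.1.1.sum)
    (t := range (n+1)) ?_]
  · exact Finset.sum_congr rfl fun i hi => fiber_card n i (by simpa using Nat.lt_succ_iff.1 (mem_range.1 hi))
  · intro x hx
    refine Finset.mem_coe.2 (mem_range.2 (Nat.lt_succ_iff.2 ?_))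
    calc x.2.1.1.sum ≤ x.1.parts.sum := msum_le (Sval_le x)
    _ = n := x.1.parts_sum

theorem Pser_eq :
    mk (fun m => (Pc m : ℚ)) = mk (fun m => (dC m : ℚ)) * mk (fun m => (oC m : ℚ)) := by
  ext n
  rw [coeff_mk, coeff_mul, Finset.Nat.sum_antidiagonal_eq_sum_range_succ_mk]
  simp only [coeff_mk]
  rw [Pc_conv]
  push_cast
  rfl

theorem rho_spec {n : ℕ} {p : n.Partition} {S : Finset ℕ}
    (h : ∃ m ∈ p.parts, p.parts.count m = 1 ∧ (∀ x ∈ p.parts, x ≤ m) ∧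
      (p.parts.erase m).sum = m ∧ (∀ x ∈ p.parts.erase m, Odd x) ∧
      ∀ x ∈ S, x ∈ p.parts.erase m) :
    n = 2 * (n / 2) ∧ (n / 2) ∈ p.parts ∧
    (p.parts.erase (n / 2)).sum = n / 2 ∧ (∀ x ∈ p.parts.erase (n / 2), Odd x) ∧
    (∀ x ∈ S, x ∈ p.parts.erase (n / 2)) ∧ 2 ≤ Multiset.card (p.parts.erase (n / 2)) := by
  obtain ⟨m, hmem, hcount, hle, hsum, hodd, hS⟩ := h
  have hpn : m ::ₘ p.parts.erase m = p.parts := Multiset.cons_erase hmem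
  have hn : n = m + m := by
    have hps := p.parts_sum
    rw [← hpn, Multiset.sum_cons, hsum] at hps
    omega
  have hm : m = n / 2 := by omega
  subst hm
  have hcard : 2 ≤ Multiset.card (p.parts.erase (n / 2)) := by
    have hc1 : Multiset.card (p.parts.erase (n / 2)) = 0 ∨
        Multiset.card (p.parts.erase (n / 2)) = 1 ∨
        2 ≤ Multiset.card (p.parts.erase (n / 2)) := by omega
    rcases hc1 with hc | hc | hc
    · exfalso
      rw [Multiset.card_eq_zero] at hc
      rw [hc] at hsum
      have := p.parts_pos hmem
      simp at hsum
      omega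
    · exfalso
      obtain ⟨a, ha⟩ := Multiset.card_eq_one.1 hc
      rw [ha] at hsum
      simp at hsum
      rw [ha, hsum] at hpn
      rw [← hpn] at hcount
      simp [Multiset.count_cons_self] at hcount
    · exact hc
  exact ⟨by omega, hmem, hsum, hodd, hS, hcard⟩

theorem inv_spec {n : ℕ} (p : n.Partition) (hmod : ∀ j ∈ p.parts, j % 4 = 2)
    (hcard : 2 ≤ Multiset.card p.parts) :
    n % 2 = 0 ∧ (p.parts.map (fun j => j / 2)).sum = n / 2 ∧ 0 < n / 2 ∧
      ∀ x ∈ p.parts.map (fun j => j / 2), x < n / 2 := by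
  have hsum := p.parts_sum
  have hdvd : (2 : ℕ) ∣ p.parts.sum := Multiset.dvd_sum (fun x hx => by have := hmod x hx; omega)
  have hmapeq : p.parts.map (fun j => 2 * (j / 2)) = p.parts.map (fun j => j) :=
    Multiset.map_congr rfl (fun a ha => by have := hmod a ha; omega)
  have h2 : 2 * (p.parts.map (fun j => j / 2)).sum = n := by
    rw [← Multiset.sum_map_mul_left, hmapeq, Multiset.map_id', hsum]
  have hlt : ∀ j ∈ p.parts, j < n := by
    intro j hj
    have hj' : j ::ₘ p.parts.erase j = p.parts := Multiset.cons_erase hj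
    have hcard' : 1 ≤ Multiset.card (p.parts.erase j) := by
      have := congrArg Multiset.card hj'
      rw [Multiset.card_cons] at this
      omega
    obtain ⟨b, hb⟩ := Multiset.exists_mem_of_ne_zero
      (s := p.parts.erase j) (fun h0 => by rw [h0] at hcard'; simp at hcard')
    have hbpos : 0 < b := p.parts_pos (Multiset.mem_of_le (Multiset.erase_le _ _) hb)
    have hble : b ≤ (p.parts.erase j).sum :=
      Multiset.single_le_sum (fun x _ => Nat.zero_le x) b hb
    have hsj := congrArg Multiset.sum hj'
    rw [Multiset.sum_cons, hsum] at hsj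
    omega
  have hpos : 0 < n / 2 := by
    have hne : p.parts ≠ 0 := by
      intro h0
      rw [h0] at hcard
      simp at hcard
    obtain ⟨j, hj⟩ := Multiset.exists_mem_of_ne_zero hne
    have h4 := hmod j hj
    have := part_le p hj
    omega
  refine ⟨by omega, by omega, hpos, ?_⟩
  intro x hx
  rw [Multiset.mem_map] at hx
  obtain ⟨j, hj, rfl⟩ := hx
  have := hlt j hj
  have := hmod j hj
  omega

abbrev RhoPred (n : ℕ) (ps : n.Partition × Finset ℕ) : Prop :=
  ∃ m ∈ ps.1.parts, ps.1.parts.count m = 1 ∧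
    (∀ x ∈ ps.1.parts, x ≤ m) ∧ (ps.1.parts.erase m).sum = m ∧
    (∀ x ∈ ps.1.parts.erase m, Odd x) ∧
    ∀ x ∈ ps.2, x ∈ ps.1.parts.erase m

theorem mem_Pst_filter {n : ℕ} {x : POb n} :
    x ∈ (Pst n).filter (fun x => 2 ≤ Multiset.card x.1.parts) ↔
      (∀ j ∈ x.1.parts, j % 4 = 2) ∧ 2 ≤ Multiset.card x.1.parts := by
  rw [Finset.mem_filter, Pst, Finset.mem_filter]
  simp only [Finset.mem_univ, true_and]

def fwd (n : ℕ) (z : {ps : n.Partition × Finset ℕ // RhoPred n ps}) : POb n :=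
  ⟨⟨(z.1.1.parts.erase (n / 2)).map (fun j => 2 * j), by
      intro a ha
      rw [Multiset.mem_map] at ha
      obtain ⟨j, hj, rfl⟩ := ha
      have := z.1.1.parts_pos (Multiset.mem_of_le (Multiset.erase_le _ _) hj)
      omega, by
      obtain ⟨h1, _, h3, _⟩ := rho_spec z.2
      rw [Multiset.sum_map_mul_left, Multiset.map_id', h3]
      omega⟩, ⟨z.1.2.image (fun j => 2 * j), by
      rw [Finset.mem_powerset]
      intro a ha
      rw [Finset.mem_image] at ha
      obtain ⟨j, hj, rfl⟩ := ha
      obtain ⟨_, _, _, _, h5, _⟩ := rho_spec z.2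
      rw [Multiset.mem_toFinset]
      show 2 * j ∈ Multiset.map _ _
      rw [Multiset.mem_map]
      exact ⟨j, h5 j hj, rfl⟩⟩⟩

theorem fwd_parts (n : ℕ) (z : {ps : n.Partition × Finset ℕ // RhoPred n ps}) :
    (fwd n z).1.parts = (z.1.1.parts.erase (n / 2)).map (fun j => 2 * j) := rfl

theorem fwd_S (n : ℕ) (z : {ps : n.Partition × Finset ℕ // RhoPred n ps}) :
    (fwd n z).2.1 = z.1.2.image (fun j => 2 * j) := rfl

theorem fwd_mem (n : ℕ) (z : {ps : n.Partition × Finset ℕ // RhoPred n ps}) :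
    fwd n z ∈ (Pst n).filter (fun x => 2 ≤ Multiset.card x.1.parts) := by
  obtain ⟨h1, h2, h3, h4, h5, h6⟩ := rho_spec z.2
  rw [mem_Pst_filter, fwd_parts]
  constructor
  · intro j hj
    rw [Multiset.mem_map] at hj
    obtain ⟨a, ha, rfl⟩ := hj
    have hodd := h4 a ha
    rw [Nat.odd_iff] at hodd
    omega
  · rw [Multiset.card_map]
    exact h6

def bwd (n : ℕ) (x : POb n) (hmod : ∀ j ∈ x.1.parts, j % 4 = 2)
    (hcard : 2 ≤ Multiset.card x.1.parts) : n.Partition × Finset ℕ :=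
  (⟨(n / 2) ::ₘ (x.1.parts.map (fun j => j / 2)), by
      obtain ⟨e1, e2, e3, e4⟩ := inv_spec x.1 hmod hcard
      intro a ha
      rw [Multiset.mem_cons] at ha
      rcases ha with rfl | ha
      · exact e3
      · rw [Multiset.mem_map] at ha
        obtain ⟨j, hj, rfl⟩ := ha
        have := hmod j hj
        omega, by
      obtain ⟨e1, e2, e3, e4⟩ := inv_spec x.1 hmod hcard
      rw [Multiset.sum_cons, e2]
      omega⟩, x.2.1.image (fun j => j / 2))

theorem bwd_pred (n : ℕ) (x : POb n) (hmod : ∀ j ∈ x.1.parts, j % 4 = 2)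
    (hcard : 2 ≤ Multiset.card x.1.parts) : RhoPred n (bwd n x hmod hcard) := by
  obtain ⟨e1, e2, e3, e4⟩ := inv_spec x.1 hmod hcard
  refine ⟨n / 2, Multiset.mem_cons_self _ _, ?_, ?_, ?_, ?_, ?_⟩
  · show Multiset.count (n / 2) ((n / 2) ::ₘ (x.1.parts.map (fun j => j / 2))) = 1
    have h0 : Multiset.count (n / 2) (x.1.parts.map (fun j => j / 2)) = 0 :=
      Multiset.count_eq_zero_of_notMem (fun hmem => lt_irrefl _ (e4 _ hmem))
    rw [Multiset.count_cons_self, h0]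
  · intro a ha
    rw [show (bwd n x hmod hcard).1.parts
        = (n / 2) ::ₘ (x.1.parts.map (fun j => j / 2)) from rfl, Multiset.mem_cons] at ha
    rcases ha with rfl | ha
    · exact le_rfl
    · exact le_of_lt (e4 a ha)
  · show (((n / 2) ::ₘ (x.1.parts.map (fun j => j / 2))).erase (n / 2)).sum = n / 2
    rw [Multiset.erase_cons_head]
    exact e2
  · intro a ha
    rw [show (bwd n x hmod hcard).1.parts
        = (n / 2) ::ₘ (x.1.parts.map (fun j => j / 2)) from rfl,
      Multiset.erase_cons_head, Multiset.mem_map] at ha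
    obtain ⟨j, hj, rfl⟩ := ha
    have := hmod j hj
    rw [Nat.odd_iff]
    omega
  · intro a ha
    rw [show (bwd n x hmod hcard).2 = x.2.1.image (fun j => j / 2) from rfl,
      Finset.mem_image] at ha
    obtain ⟨j, hj, rfl⟩ := ha
    have hjp : j ∈ x.1.parts := Multiset.mem_toFinset.1 (Finset.mem_powerset.1 x.2.2 hj)
    rw [show (bwd n x hmod hcard).1.parts
        = (n / 2) ::ₘ (x.1.parts.map (fun j => j / 2)) from rfl,
      Multiset.erase_cons_head, Multiset.mem_map]
    exact ⟨j, hjp, rfl⟩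

noncomputable def rhoEquiv (n : ℕ) :
    {ps : n.Partition × Finset ℕ // RhoPred n ps} ≃
    {x : POb n // x ∈ (Pst n).filter fun x => 2 ≤ Multiset.card x.1.parts} where
  toFun z := ⟨fwd n z, fwd_mem n z⟩
  invFun y :=
    ⟨bwd n y.1 (mem_Pst_filter.1 y.2).1 (mem_Pst_filter.1 y.2).2,
     bwd_pred n y.1 (mem_Pst_filter.1 y.2).1 (mem_Pst_filter.1 y.2).2⟩
  left_inv z := by
    apply Subtype.ext
    apply Prod.ext
    · apply Nat.Partition.ext
      show (n / 2) ::ₘ (fwd n z).1.parts.map (fun j => j / 2) = z.1.1.parts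
      rw [fwd_parts, Multiset.map_map]
      rw [show ((fun j => j / 2) ∘ (fun j => 2 * j)) = id from funext fun j => by
        simp]
      rw [Multiset.map_id]
      exact Multiset.cons_erase (rho_spec z.2).2.1
    · show (fwd n z).2.1.image (fun j => j / 2) = z.1.2
      rw [fwd_S, Finset.image_image]
      rw [show ((fun j => j / 2) ∘ (fun j => 2 * j)) = id from funext fun j => by
        simp]
      exact Finset.image_id
  right_inv y := by
    have hy := mem_Pst_filter.1 y.2
    obtain ⟨hmod, hcard⟩ := hy
    apply Subtype.ext
    apply POb_ext
    · show ((bwd n y.1 (mem_Pst_filter.1 y.2).1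
          (mem_Pst_filter.1 y.2).2).1.parts.erase (n / 2)).map (fun j => 2 * j) = y.1.1.parts
      rw [show (bwd n y.1 (mem_Pst_filter.1 y.2).1 (mem_Pst_filter.1 y.2).2).1.parts
          = (n / 2) ::ₘ (y.1.1.parts.map (fun j => j / 2)) from rfl]
      rw [Multiset.erase_cons_head, Multiset.map_map]
      rw [show Multiset.map ((fun j => 2 * j) ∘ (fun j => j / 2)) y.1.1.parts
          = Multiset.map (fun j => j) y.1.1.parts from
        Multiset.map_congr rfl (fun a ha => by have := hmod a ha; simp; omega)]
      exact Multiset.map_id' _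
    · show ((bwd n y.1 (mem_Pst_filter.1 y.2).1
          (mem_Pst_filter.1 y.2).2).2).image (fun j => 2 * j) = y.1.2.1
      rw [show (bwd n y.1 (mem_Pst_filter.1 y.2).1 (mem_Pst_filter.1 y.2).2).2
          = y.1.2.1.image (fun j => j / 2) from rfl]
      rw [Finset.image_image]
      rw [show Finset.image ((fun j => 2 * j) ∘ (fun j => j / 2)) y.1.2.1
          = Finset.image id y.1.2.1 from Finset.image_congr (fun a ha => by
        have hap : a ∈ y.1.1.parts :=
          Multiset.mem_toFinset.1 (Finset.mem_powerset.1 y.1.2.2 ha)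
        have := hmod a hap
        simp
        omega)]
      exact Finset.image_id

theorem rho_card (n : ℕ) :
    rhoBarOdd n = ((Pst n).filter fun x => 2 ≤ Multiset.card x.1.parts).card := by
  rw [rhoBarOdd, ← Nat.card_eq_finsetCard]
  exact Nat.card_congr (rhoEquiv n)

theorem rho_zero : rhoBarOdd 0 = 0 := by
  rw [rhoBarOdd]
  haveI : IsEmpty {ps : (0:ℕ).Partition × Finset ℕ // ∃ m ∈ ps.1.parts,
      ps.1.parts.count m = 1 ∧ (∀ x ∈ ps.1.parts, x ≤ m) ∧ (ps.1.parts.erase m).sum = m ∧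
      (∀ x ∈ ps.1.parts.erase m, Odd x) ∧ ∀ x ∈ ps.2, x ∈ ps.1.parts.erase m} := by
    refine ⟨fun z => ?_⟩
    obtain ⟨m, hmem, _⟩ := z.2
    have h1 := z.1.1.parts_pos hmem
    have h2 := part_le z.1.1 hmem
    omega
  exact Nat.card_of_isEmpty

theorem parts_of_zero (p : (0:ℕ).Partition) : p.parts = 0 :=
  Multiset.eq_zero_of_forall_notMem fun a ha => by
    have := p.parts_pos ha
    have := part_le p ha
    omega

theorem Pc_zero : Pc 0 = 1 := by
  have hPst : Pst 0 = Finset.univ := by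
    rw [Pst]
    apply Finset.filter_true_of_mem
    intro x _ j hj
    rw [parts_of_zero x.1] at hj
    simp at hj
  rw [Pc, hPst, Finset.card_univ]
  rw [Fintype.card_eq_one_iff]
  refine ⟨⟨⟨0, by simp, by simp⟩, ⟨∅, Finset.empty_mem_powerset _⟩⟩, fun y => ?_⟩
  apply POb_ext
  · exact parts_of_zero y.1
  · have : y.2.1 = ∅ := Finset.eq_empty_of_forall_notMem (fun a ha => by
      have h := Multiset.mem_toFinset.1 (Finset.mem_powerset.1 y.2.2 ha)
      rw [parts_of_zero y.1] at h
      simp at h)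
    exact this

theorem small_count (n : ℕ) (hn : n ≠ 0) :
    ((Pst n).filter fun x => ¬ 2 ≤ Multiset.card x.1.parts).card
      = if n % 4 = 2 then 2 else 0 := by
  have key : ∀ x ∈ (Pst n).filter fun x => ¬ 2 ≤ Multiset.card x.1.parts,
      x.1.parts = {n} ∧ n % 4 = 2 ∧ (x.2.1 = ∅ ∨ x.2.1 = {n}) := by
    intro x hx
    rw [Finset.mem_filter, Pst, Finset.mem_filter] at hx
    obtain ⟨⟨_, hmod⟩, hcard⟩ := hx
    have hc01 : Multiset.card x.1.parts = 0 ∨ Multiset.card x.1.parts = 1 := by omega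
    have hparts : x.1.parts = {n} := by
      rcases hc01 with hc | hc
      · exfalso
        rw [Multiset.card_eq_zero] at hc
        have := x.1.parts_sum
        rw [hc] at this
        simp at this
        omega
      · obtain ⟨a, ha⟩ := Multiset.card_eq_one.1 hc
        have := x.1.parts_sum
        rw [ha] at this ⊢
        simp at this
        rw [this]
    have hmod' : n % 4 = 2 := by
      have := hmod n (by rw [hparts]; exact Multiset.mem_singleton_self n)
      exact this
    refine ⟨hparts, hmod', ?_⟩
    have hel : ∀ a ∈ x.2.1, a = n := fun a ha => by
      have h := Multiset.mem_toFinset.1 (Finset.mem_powerset.1 x.2.2 ha)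
      rw [hparts, Multiset.mem_singleton] at h
      exact h
    exact Finset.subset_singleton_iff.1
      (fun a ha => Finset.mem_singleton.2 (hel a ha))
  by_cases h42 : n % 4 = 2
  · rw [if_pos h42]
    have hn2 : 2 ≤ n := by omega
    set pn : n.Partition := ⟨{n}, by
      intro a ha
      rw [Multiset.mem_singleton] at ha
      omega, by simp⟩ with hpn
    set A : POb n := ⟨pn, ⟨∅, Finset.empty_mem_powerset _⟩⟩ with hA
    set B : POb n := ⟨pn, ⟨{n}, by
      rw [Finset.mem_powerset]
      intro a ha
      rw [Finset.mem_singleton] at ha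
      subst ha
      rw [Multiset.mem_toFinset]
      show a ∈ pn.parts
      rw [hpn]
      exact Multiset.mem_singleton_self a⟩⟩ with hB
    have hfilter : ((Pst n).filter fun x => ¬ 2 ≤ Multiset.card x.1.parts) = {A, B} := by
      ext x
      rw [Finset.mem_insert, Finset.mem_singleton]
      constructor
      · intro hx
        obtain ⟨hparts, _, hS⟩ := key x hx
        rcases hS with hS | hS
        · left; exact POb_ext (by rw [hparts]) (by rw [hS])
        · right; exact POb_ext (by rw [hparts]) (by rw [hS])
      · intro hx
        have hmem : ∀ y : POb n, y.1.parts = {n} →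
            y ∈ (Pst n).filter fun x => ¬ 2 ≤ Multiset.card x.1.parts := by
          intro y hy
          rw [Finset.mem_filter, Pst, Finset.mem_filter]
          refine ⟨⟨Finset.mem_univ _, ?_⟩, ?_⟩
          · intro j hj
            rw [hy, Multiset.mem_singleton] at hj
            omega
          · rw [hy]
            simp
        rcases hx with rfl | rfl
        · exact hmem A rfl
        · exact hmem B rfl
    rw [hfilter]
    rw [Finset.card_insert_of_notMem, Finset.card_singleton]
    rw [Finset.mem_singleton]
    intro hAB
    have := congrArg (fun z : POb n => z.2.1) hAB
    replace this : (∅ : Finset ℕ) = {n} := this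
    have hnn : n ∈ (∅ : Finset ℕ) := by
      rw [this]
      exact Finset.mem_singleton_self n
    simp at hnn
  · rw [if_neg h42, Finset.card_eq_zero]
    apply Finset.eq_empty_of_forall_notMem
    intro x hx
    exact h42 (key x hx).2.1

theorem Pc_split (n : ℕ) (hn : n ≠ 0) :
    Pc n = rhoBarOdd n + (if n % 4 = 2 then 2 else 0) := by
  have h := Finset.card_filter_add_card_filter_not (s := Pst n)
    (p := fun x => 2 ≤ Multiset.card x.1.parts)
  rw [small_count n hn] at h
  rw [Pc, rho_card n]
  omega

theorem const_euler (a : ℕ) (ha : a ≠ 0) : constantCoeff (eulerProd a) = 1 := by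
  rw [← PowerSeries.coeff_zero_eq_constantCoeff_apply]
  rw [eulerProd, coeff_mk]
  rw [Finset.prod_range_one]
  rw [map_sub, PowerSeries.coeff_one, PowerSeries.coeff_X_pow]
  have h1 : ¬ (0 = a * (0 + 1)) := by omega
  have h2 : ¬ (0 = a) := by omega
  simp [h1, h2]

theorem geom_eq : ((1 : PS) - X ^ 4)⁻¹ = indicatorSeries ℚ {k | 4 ∣ k} := by
  rw [PowerSeries.inv_eq_iff_mul_eq_one]
  · rw [mul_comm]
    exact ind_mul_neg 4 (by norm_num)
  · simp [zero_pow]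

theorem Pser_formula :
    mk (fun m => (Pc m : ℚ)) = eulerProd 4 ^ 3 * ((eulerProd 2)⁻¹) ^ 2 * (eulerProd 8)⁻¹ := by
  have h2 : constantCoeff (eulerProd 2) ≠ 0 := by
    rw [const_euler 2 (by norm_num)]; norm_num
  have h8 : constantCoeff (eulerProd 8) ≠ 0 := by
    rw [const_euler 8 (by norm_num)]; norm_num
  rw [Pser_eq, ← main_eq]
  rw [show mk (fun m => (dC m : ℚ)) * mk (fun m => (oC m : ℚ)) * eulerProd 2 ^ 2 * eulerProd 8
        * ((eulerProd 2)⁻¹) ^ 2 * (eulerProd 8)⁻¹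
      = mk (fun m => (dC m : ℚ)) * mk (fun m => (oC m : ℚ))
        * ((eulerProd 2 * (eulerProd 2)⁻¹) ^ 2 * (eulerProd 8 * (eulerProd 8)⁻¹)) from by ring]
  rw [PowerSeries.mul_inv_cancel _ h2, PowerSeries.mul_inv_cancel _ h8]
  ring

end
end RhoAux

/-- `∑ ρ̄_o(n) q^n = (q^4;q^4)_∞^3/((q^2;q^2)_∞^2 (q^8;q^8)_∞) − 2q^2/(1−q^4) − 1`. -/
theorem rhoBarOdd_generating_function :
    PowerSeries.mk (fun n => (rhoBarOdd n : ℚ)) =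
      (eulerProd 4) ^ 3 * ((eulerProd 2)⁻¹) ^ 2 * (eulerProd 8)⁻¹
        - 2 * (PowerSeries.X : PowerSeries ℚ) ^ 2
            * (1 - (PowerSeries.X : PowerSeries ℚ) ^ 4)⁻¹ - 1 := by
  classical
  rw [← RhoAux.Pser_formula, RhoAux.geom_eq]
  rw [show (2 : PowerSeries ℚ) * (X : PowerSeries ℚ) ^ 2
        * RhoAux.indicatorSeries ℚ {k | 4 ∣ k}
      = (X : PowerSeries ℚ) ^ 2 * RhoAux.indicatorSeries ℚ {k | 4 ∣ k}
        + (X : PowerSeries ℚ) ^ 2 * RhoAux.indicatorSeries ℚ {k | 4 ∣ k} from by ring]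
  ext n
  rw [map_sub, map_sub, map_add, PowerSeries.coeff_mk, PowerSeries.coeff_mk,
    PowerSeries.coeff_X_pow_mul', RhoAux.coeff_indicator, PowerSeries.coeff_one]
  simp only [Set.mem_setOf_eq]
  by_cases hn : n = 0
  · subst hn
    rw [if_pos rfl, if_neg (by omega : ¬ 2 ≤ 0)]
    rw [RhoAux.rho_zero, RhoAux.Pc_zero]
    norm_num
  · rw [if_neg hn, sub_zero]
    have hsplit := RhoAux.Pc_split n hn
    by_cases h42 : n % 4 = 2
    · have h2n : 2 ≤ n := by omega
      have hd : 4 ∣ n - 2 := by omega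
      rw [if_pos h2n, if_pos hd, hsplit, if_pos h42]
      push_cast
      ring
    · rw [hsplit, if_neg h42]
      by_cases h2n : 2 ≤ n
      · have hd : ¬ 4 ∣ n - 2 := by omega
        rw [if_pos h2n, if_neg hd]
        push_cast
        ring
      · rw [if_neg h2n]
        push_cast
        ring
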